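/- For i = 1,…,N let r_i, z_i ∈ ℝ³ and σ_i > 0, and for i = N+1,…,N+M let r_i, z_i ∈ ℝ³ be unit vectors and κ_i > 0. Define the likelihood p_i(R) = (2πσ_i²)^{-3/2}·exp(−‖z_i − Rᵀr_i‖²/(2σ_i²)) for i ≤ N and p_i(R) = (κ_i/(4π·sinh κ_i))·exp(κ_i·r_iᵀRz_i) for i > N. Let k = Σ_{i=1}^{N} σ_i^{-2} + Σ_{i=N+1}^{N+M} κ_i, and define the weights w_i = σ_i^{-2}/k for i ≤ N and w_i = κ_i/k for i > N, and the matrix B = Σ_{i=1}^{N+M} w_i·r_i z_iᵀ. Then for any R* ∈ SO(3), R* maximizes the posterior density R ↦ ∏_{i=1}^{N+M} p_i(R) / ∫_{SO(3)} ∏_{i=1}^{N+M} p_i(Q) dμ(Q) over SO(3) (the maximum a posteriori estimate under the uniform prior π(R) = 1 with respect to μ) if and only if R* minimizes the Wahba loss function L(R) = 1 − tr(BᵀR) over SO(3). -/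

import Mathlib

open Matrix MeasureTheory

noncomputable section

instance : MeasurableSpace (Matrix (Fin 3) (Fin 3) ℝ) := MeasurableSpace.pi

/-- `SO(3)`: real 3×3 orthogonal matrices with determinant 1. -/
def SO3 : Set (Matrix (Fin 3) (Fin 3) ℝ) := {R | R * Rᵀ = 1 ∧ R.det = 1}

/-- Likelihood of a (possibly non-unit) vector measurement `z` of reference vector `r`
with isotropic Gaussian noise of covariance `σ² I₃`. -/
def gaussLik (σ : ℝ) (r z : Fin 3 → ℝ) (R : Matrix (Fin 3) (Fin 3) ℝ) : ℝ :=
  (2 * Real.pi * σ ^ 2) ^ (-(3 : ℝ) / 2) *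
    Real.exp (-(∑ j, (z j - Rᵀ.mulVec r j) ^ 2) / (2 * σ ^ 2))

/-- von Mises–Fisher likelihood of a unit vector measurement `z` of reference vector `r`
with concentration parameter `κ`. -/
def vmfLik (κ : ℝ) (r z : Fin 3 → ℝ) (R : Matrix (Fin 3) (Fin 3) ℝ) : ℝ :=
  κ / (4 * Real.pi * Real.sinh κ) * Real.exp (κ * (r ⬝ᵥ R.mulVec z))

lemma trace_vmv (r z : Fin 3 → ℝ) (R : Matrix (Fin 3) (Fin 3) ℝ) :
    ((vecMulVec r z)ᵀ * R).trace = r ⬝ᵥ R.mulVec z := by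
  simp only [Matrix.trace, Matrix.diag, Matrix.mul_apply, Matrix.transpose_apply,
    Matrix.vecMulVec_apply, dotProduct, Matrix.mulVec, Finset.mul_sum]
  rw [Finset.sum_comm]
  exact Finset.sum_congr rfl fun j _ => Finset.sum_congr rfl fun i _ => by ring

lemma dot_swap (r z : Fin 3 → ℝ) (R : Matrix (Fin 3) (Fin 3) ℝ) :
    z ⬝ᵥ Rᵀ.mulVec r = r ⬝ᵥ R.mulVec z := by
  rw [Matrix.dotProduct_mulVec, Matrix.vecMul_transpose, dotProduct_comm]

lemma norm_expand {R : Matrix (Fin 3) (Fin 3) ℝ} (hR : R * Rᵀ = 1) (r z : Fin 3 → ℝ) :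
    ∑ j, (z j - Rᵀ.mulVec r j) ^ 2
      = (∑ j, z j ^ 2) + (∑ j, r j ^ 2) - 2 * (r ⬝ᵥ R.mulVec z) := by
  have h1 : ∑ j, (Rᵀ.mulVec r j) ^ 2 = ∑ j, r j ^ 2 := by
    have : Rᵀ.mulVec r ⬝ᵥ Rᵀ.mulVec r = r ⬝ᵥ r := by
      rw [Matrix.dotProduct_mulVec, Matrix.vecMul_transpose, Matrix.mulVec_mulVec, hR,
        Matrix.one_mulVec]
    simpa [dotProduct, sq] using this
  have h2 : ∑ j, z j * Rᵀ.mulVec r j = r ⬝ᵥ R.mulVec z := dot_swap r z R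
  calc ∑ j, (z j - Rᵀ.mulVec r j) ^ 2
      = ∑ j, (z j ^ 2 + (Rᵀ.mulVec r j) ^ 2 - 2 * (z j * Rᵀ.mulVec r j)) := by
        exact Finset.sum_congr rfl fun j _ => by ring
    _ = (∑ j, z j ^ 2) + (∑ j, r j ^ 2) - 2 * (r ⬝ᵥ R.mulVec z) := by
        rw [Finset.sum_sub_distrib, Finset.sum_add_distrib, h1, ← Finset.mul_sum, h2]

lemma entry_abs_le {R : Matrix (Fin 3) (Fin 3) ℝ} (hR : R * Rᵀ = 1) (i j : Fin 3) :
    |R i j| ≤ 1 := by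
  have h : ∑ m, R i m * R i m = 1 := by
    have := congrFun (congrFun hR i) i
    simpa [Matrix.mul_apply, Matrix.one_apply] using this
  have hle : R i j ^ 2 ≤ 1 := by
    rw [← h]
    have : R i j * R i j ≤ ∑ m, R i m * R i m :=
      Finset.single_le_sum (f := fun m => R i m * R i m)
        (fun m _ => mul_self_nonneg _) (Finset.mem_univ j)
    simpa [sq] using this
  exact (sq_le_one_iff_abs_le_one _).mp hle


/-- Under the uniform prior on `SO(3)`, `R* ∈ SO(3)` is a maximum a posteriori attitude estimate
if and only if it minimizes the Wahba loss `L(R) = 1 − tr(Bᵀ R)` with the stated weights. -/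
theorem MAP_iff_Wahba_minimizer
    (μ : Measure (Matrix (Fin 3) (Fin 3) ℝ)) [IsProbabilityMeasure μ]
    (hsupp : μ SO3ᶜ = 0)
    (hleft : ∀ U ∈ SO3, μ.map (fun R => U * R) = μ)
    (hright : ∀ U ∈ SO3, μ.map (fun R => R * U) = μ)
    (N M : ℕ)
    (r z : Fin N → Fin 3 → ℝ) (σ : Fin N → ℝ) (hσ : ∀ i, 0 < σ i)
    (r' z' : Fin M → Fin 3 → ℝ) (κ : Fin M → ℝ) (hκ : ∀ i, 0 < κ i)
    (hr' : ∀ i, ∑ j, (r' i j) ^ 2 = 1) (hz' : ∀ i, ∑ j, (z' i j) ^ 2 = 1)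
    (k : ℝ) (hk : k = (∑ i, ((σ i) ^ 2)⁻¹) + ∑ i, κ i)
    (B : Matrix (Fin 3) (Fin 3) ℝ)
    (hB : B = (∑ i, (((σ i) ^ 2)⁻¹ / k) • vecMulVec (r i) (z i))
        + ∑ i, (κ i / k) • vecMulVec (r' i) (z' i))
    (Rstar : Matrix (Fin 3) (Fin 3) ℝ) (hRstar : Rstar ∈ SO3) :
    (∀ R ∈ SO3,
        ((∏ i, gaussLik (σ i) (r i) (z i) R) * ∏ i, vmfLik (κ i) (r' i) (z' i) R) /
          (∫ Q, (∏ i, gaussLik (σ i) (r i) (z i) Q) * ∏ i, vmfLik (κ i) (r' i) (z' i) Q ∂μ)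
        ≤ ((∏ i, gaussLik (σ i) (r i) (z i) Rstar) * ∏ i, vmfLik (κ i) (r' i) (z' i) Rstar) /
          (∫ Q, (∏ i, gaussLik (σ i) (r i) (z i) Q) * ∏ i, vmfLik (κ i) (r' i) (z' i) Q ∂μ))
    ↔ (∀ R ∈ SO3, 1 - (Bᵀ * Rstar).trace ≤ 1 - (Bᵀ * R).trace) := by
  set P : Matrix (Fin 3) (Fin 3) ℝ → ℝ :=
    fun R => (∏ i, gaussLik (σ i) (r i) (z i) R) * ∏ i, vmfLik (κ i) (r' i) (z' i) R with hP
  set A : Matrix (Fin 3) (Fin 3) ℝ :=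
    (∑ i, ((σ i) ^ 2)⁻¹ • vecMulVec (r i) (z i)) + ∑ i, κ i • vecMulVec (r' i) (z' i) with hA
  set C : ℝ :=
    (∏ i, ((2 * Real.pi * (σ i) ^ 2) ^ (-(3 : ℝ) / 2) *
      Real.exp (-((∑ j, (z i j) ^ 2) + ∑ j, (r i j) ^ 2) / (2 * (σ i) ^ 2)))) *
    ∏ i, κ i / (4 * Real.pi * Real.sinh (κ i)) with hC
  have hσ2 : ∀ i, (0 : ℝ) < (σ i) ^ 2 := fun i => pow_pos (hσ i) 2
  have hCpos : 0 < C := by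
    apply mul_pos
    · exact Finset.prod_pos fun i _ => mul_pos
        (Real.rpow_pos_of_pos (mul_pos (by positivity) (hσ2 i)) _) (Real.exp_pos _)
    · exact Finset.prod_pos fun i _ => div_pos (hκ i)
        (mul_pos (by positivity) (Real.sinh_pos_iff.mpr (hκ i)))
  have hPpos : ∀ R, 0 < P R := by
    intro R
    apply mul_pos
    · exact Finset.prod_pos fun i _ => mul_pos
        (Real.rpow_pos_of_pos (mul_pos (by positivity) (hσ2 i)) _) (Real.exp_pos _)
    · exact Finset.prod_pos fun i _ => mul_pos (div_pos (hκ i)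
        (mul_pos (by positivity) (Real.sinh_pos_iff.mpr (hκ i)))) (Real.exp_pos _)
  have htrA : ∀ R : Matrix (Fin 3) (Fin 3) ℝ, (Aᵀ * R).trace
      = (∑ i, ((σ i) ^ 2)⁻¹ * (r i ⬝ᵥ R.mulVec (z i)))
        + ∑ i, κ i * (r' i ⬝ᵥ R.mulVec (z' i)) := by
    intro R
    simp [hA, Matrix.transpose_add, Matrix.transpose_sum, Matrix.transpose_smul,
      Matrix.add_mul, Matrix.sum_mul, Matrix.smul_mul, Matrix.trace_add, Matrix.trace_sum,
      Matrix.trace_smul, trace_vmv, smul_eq_mul, -Matrix.transpose_vecMulVec]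
  have key : ∀ R : Matrix (Fin 3) (Fin 3) ℝ, R * Rᵀ = 1 →
      P R = C * Real.exp ((Aᵀ * R).trace) := by
    intro R hR
    have hg : ∀ i, gaussLik (σ i) (r i) (z i) R
        = ((2 * Real.pi * (σ i) ^ 2) ^ (-(3 : ℝ) / 2) *
            Real.exp (-((∑ j, (z i j) ^ 2) + ∑ j, (r i j) ^ 2) / (2 * (σ i) ^ 2))) *
          Real.exp (((σ i) ^ 2)⁻¹ * (r i ⬝ᵥ R.mulVec (z i))) := by
      intro i
      unfold gaussLik
      rw [norm_expand hR]
      conv_rhs => rw [mul_assoc, ← Real.exp_add]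
      congr 1
      have h := (hσ2 i).ne'
      field_simp
      ring
    have hv : ∀ i, vmfLik (κ i) (r' i) (z' i) R
        = (κ i / (4 * Real.pi * Real.sinh (κ i))) *
          Real.exp (κ i * (r' i ⬝ᵥ R.mulVec (z' i))) := fun i => rfl
    rw [hP]
    simp only []
    rw [Finset.prod_congr rfl fun i _ => hg i, Finset.prod_congr rfl fun i _ => hv i, htrA, hC]
    simp only [Finset.prod_mul_distrib, ← Real.exp_sum, Real.exp_add]
    ring
  -- bound and integrability
  set D : ℝ := C * Real.exp (∑ p, ∑ q, |A q p|) with hD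
  have hboundP : ∀ R, R * Rᵀ = 1 → P R ≤ D := by
    intro R hR
    rw [key R hR, hD]
    apply mul_le_mul_of_nonneg_left _ hCpos.le
    rw [Real.exp_le_exp]
    simp only [Matrix.trace, Matrix.diag, Matrix.mul_apply, Matrix.transpose_apply]
    apply Finset.sum_le_sum; intro p _
    apply Finset.sum_le_sum; intro q _
    calc A q p * R q p ≤ |A q p * R q p| := le_abs_self _
      _ = |A q p| * |R q p| := abs_mul _ _
      _ ≤ |A q p| * 1 := mul_le_mul_of_nonneg_left (entry_abs_le hR q p) (abs_nonneg _)
      _ = |A q p| := mul_one _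
  have hPmeas : Measurable P := by
    apply Measurable.mul <;> apply Finset.measurable_prod <;> intro i _
    · unfold gaussLik
      apply Measurable.mul measurable_const
      apply Real.measurable_exp.comp
      apply Measurable.div _ measurable_const
      apply Measurable.neg
      apply Finset.measurable_sum; intro j _
      apply Measurable.pow _ measurable_const
      apply Measurable.sub measurable_const
      simp only [Matrix.mulVec, dotProduct, Matrix.transpose_apply]
      apply Finset.measurable_sum; intro m _
      exact ((measurable_pi_apply j).comp (measurable_pi_apply (X := fun _ : Fin 3 => Fin 3 → ℝ) m)).mul measurable_const
    · unfold vmfLik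
      apply Measurable.mul measurable_const
      apply Real.measurable_exp.comp
      apply Measurable.mul measurable_const
      simp only [dotProduct, Matrix.mulVec]
      apply Finset.measurable_sum; intro m _
      apply Measurable.mul measurable_const
      apply Finset.measurable_sum; intro n _
      exact ((measurable_pi_apply n).comp (measurable_pi_apply (X := fun _ : Fin 3 => Fin 3 → ℝ) m)).mul measurable_const
  have haeSO3 : ∀ᵐ R ∂μ, R ∈ SO3 := by
    rw [ae_iff]
    exact measure_mono_null (fun x hx => hx) hsupp
  have hint : Integrable P μ := by
    refine (integrable_const D).mono' hPmeas.aestronglyMeasurable ?_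
    filter_upwards [haeSO3] with R hR
    rw [Real.norm_eq_abs, abs_of_pos (hPpos R)]
    exact hboundP R hR.1
  have hIpos : 0 < ∫ Q, P Q ∂μ := by
    rw [integral_pos_iff_support_of_nonneg_ae (ae_of_all _ fun R => (hPpos R).le) hint]
    have hsup : Function.support P = Set.univ := Set.eq_univ_of_forall fun R => (hPpos R).ne'
    rw [hsup]
    simp
  have htrk : ∀ R : Matrix (Fin 3) (Fin 3) ℝ, (Aᵀ * R).trace = k * (Bᵀ * R).trace := by
    intro R
    have hAkB : A = k • B := by
      rcases eq_or_ne k 0 with hk0 | hk0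
      · have hsum1 : (∑ i, ((σ i) ^ 2)⁻¹) = 0 ∧ (∑ i, κ i) = 0 := by
          constructor <;> [skip; skip] <;>
          · nlinarith [Finset.sum_nonneg (fun i (_ : i ∈ Finset.univ) => (inv_pos.mpr (hσ2 i)).le),
              Finset.sum_nonneg (fun i (_ : i ∈ Finset.univ) => (hκ i).le), hk, hk0]
        have hN : ∀ i : Fin N, False := by
          intro i
          have := (Finset.sum_eq_zero_iff_of_nonneg
            (fun i (_ : i ∈ Finset.univ) => (inv_pos.mpr (hσ2 i)).le)).mp hsum1.1 i (Finset.mem_univ i)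
          exact absurd this (inv_pos.mpr (hσ2 i)).ne'
        have hM : ∀ i : Fin M, False := by
          intro i
          have := (Finset.sum_eq_zero_iff_of_nonneg
            (fun i (_ : i ∈ Finset.univ) => (hκ i).le)).mp hsum1.2 i (Finset.mem_univ i)
          exact absurd this (hκ i).ne'
        rw [hA, hk0, zero_smul]
        rw [Finset.sum_eq_zero fun i _ => (hN i).elim, Finset.sum_eq_zero fun i _ => (hM i).elim,
          add_zero]
      · rw [hB, smul_add, Finset.smul_sum, Finset.smul_sum, hA]
        congr 1 <;> apply Finset.sum_congr rfl <;> intro i _ <;>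
          rw [smul_smul, mul_div_cancel₀ _ hk0]
    rw [hAkB, Matrix.transpose_smul, Matrix.smul_mul, Matrix.trace_smul, smul_eq_mul]
  have hknn : 0 ≤ k := by
    rw [hk]
    apply add_nonneg
    · exact Finset.sum_nonneg fun i _ => (inv_pos.mpr (hσ2 i)).le
    · exact Finset.sum_nonneg fun i _ => (hκ i).le
  have hiff1 : (∀ R ∈ SO3, P R / (∫ Q, P Q ∂μ) ≤ P Rstar / (∫ Q, P Q ∂μ))
      ↔ ∀ R ∈ SO3, P R ≤ P Rstar :=
    forall₂_congr fun R _ => div_le_div_iff_of_pos_right hIpos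
  have hiff2 : ∀ R ∈ SO3, (P R ≤ P Rstar ↔ k * (Bᵀ * R).trace ≤ k * (Bᵀ * Rstar).trace) := by
    intro R hR
    rw [key R hR.1, key Rstar hRstar.1, mul_le_mul_iff_right₀ hCpos, Real.exp_le_exp, htrk, htrk]
  refine hiff1.trans ((forall₂_congr hiff2).trans ?_)
  rcases eq_or_lt_of_le hknn with hk0 | hkpos
  · have hB0 : B = 0 := by
      rw [hB, ← hk0]
      simp
    apply iff_of_true <;> intro R hR <;> rw [hB0] <;> simp
  · refine forall₂_congr fun R _ => ?_
    rw [mul_le_mul_iff_right₀ hkpos, sub_le_sub_iff_left]
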